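/- arXiv:1804.05441 — 2 statements merged into one kernel-verified Lean document; each statement's English description precedes it below -/
import Mathlib

section
/- Let h ≥ 1 be a natural number. Suppose that for each u ∈ V we are given an h-hop SSSP tree rooted at u, i.e. a set R_u ⊆ V with u ∈ R_u and a parent function par_u : R_u → R_u with par_u(u) = u such that: every v ∈ R_u reaches u by iterating par_u; the number d_u(v) of parent-iterations needed to go from v to u satisfies d_u(v) ≤ h; the tree path from u to v (the reversal of the sequence v, par_u(v), par_u²(v), …, u) is a walk from u to v whose weight equals δ_h(u,v); and R_u contains every v ∈ V with δ_h(u,v) < ∞. Suppose Q ⊆ V is a blocker set for this collection of trees, i.e. for every u ∈ V and every v ∈ R_u with d_u(v) = h, the tree path from u to v contains a vertex of Q. Then for all u, v ∈ V: δ(u,v) = min( δ_h(u,v), min_{c ∈ Q} ( δ_h(u,c) + δ(c,v) ) ). -/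
open scoped ENNReal BigOperators

/-- The weight of a walk, given as the list of vertices it visits (in order):
the sum of the edge weights of consecutive pairs. A single vertex has weight 0. -/
noncomputable def walkWeight {V : Type*} (w : V → V → ℝ≥0∞) (p : List V) : ℝ≥0∞ :=
  (List.zipWith w p p.tail).sum

/-- `p` is a walk from `u` to `v`: a nonempty list of vertices starting at `u`
and ending at `v`. -/
def IsWalk {V : Type*} (u v : V) (p : List V) : Prop :=
  p.head? = some u ∧ p.getLast? = some v

/-- Shortest-path distance: infimum of walk weights over all walks from `u` to `v`
(`∞` if there is no walk). -/
noncomputable def delta {V : Type*} (w : V → V → ℝ≥0∞) (u v : V) : ℝ≥0∞ :=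
  ⨅ p ∈ {p : List V | IsWalk u v p}, walkWeight w p

/-- `h`-hop shortest-path distance: infimum of walk weights over all walks from `u`
to `v` with at most `h` edges (`∞` if there is no such walk). -/
noncomputable def deltaH {V : Type*} (w : V → V → ℝ≥0∞) (h : ℕ) (u v : V) : ℝ≥0∞ :=
  ⨅ p ∈ {p : List V | IsWalk u v p ∧ p.length ≤ h + 1}, walkWeight w p

/-!
Cut a walk `p` from `u` to `v` with more than `h` edges after its first `h` edges, at `x`.
The tree path to `x` weighs `δ_h(u, x)`, at most the cut-off prefix, so gluing it to the rest
of `p` gives a walk that is no heavier. If the tree path has `h` edges it passes through some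
`c ∈ Q` within its first `h` edges, and the glued walk bounds `δ_h(u, c) + δ(c, v)`; otherwise
the glued walk has fewer edges than `p`, and we conclude by induction on the number of edges.
-/

section

variable {V : Type*} {w : V → V → ℝ≥0∞} {h : ℕ} {u v : V} {p q : List V}

theorem walkWeight_cons_cons (x y : V) (l : List V) :
    walkWeight w (x :: y :: l) = w x y + walkWeight w (y :: l) := by
  simp [walkWeight]

theorem walkWeight_append_cons (p : List V) (c : V) (q : List V) :
    walkWeight w (p ++ c :: q) = walkWeight w (p ++ [c]) + walkWeight w (c :: q) := by
  induction p with
  | nil => simp [walkWeight]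
  | cons x p ih =>
    cases p with
    | nil => simp [walkWeight]
    | cons y p' =>
      simp only [List.cons_append, walkWeight_cons_cons]
      rw [← List.cons_append, ← List.cons_append, ih, add_assoc]

theorem walkWeight_append_tail {c : V} (hp : p.getLast? = some c) (hq : q.head? = some c) :
    walkWeight w (p ++ q.tail) = walkWeight w p + walkWeight w q := by
  obtain ⟨p', rfl⟩ : ∃ p', p = p' ++ [c] := List.getLast?_eq_some_iff.mp hp
  obtain ⟨q', rfl⟩ : ∃ q', q = c :: q' := List.head?_eq_some_iff.mp hq
  simp only [List.tail_cons, List.append_assoc, List.singleton_append]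
  exact walkWeight_append_cons p' c q'

theorem walkWeight_take_add_drop (p : List V) {i : ℕ} (hi : i < p.length) :
    walkWeight w (p.take (i + 1)) + walkWeight w (p.drop i) = walkWeight w p := by
  rw [← walkWeight_append_tail (c := p[i]) (by simp [List.getLast?_take, hi])
      (by simp [List.head?_drop, hi]), List.tail_drop, List.take_append_drop]

theorem IsWalk.append {c : V} (hp : IsWalk u c p) (hq : IsWalk c v q) :
    IsWalk u v (p ++ q.tail) := by
  obtain ⟨p', rfl⟩ : ∃ p', p = p' ++ [c] := List.getLast?_eq_some_iff.mp hp.2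
  obtain ⟨q', rfl⟩ : ∃ q', q = c :: q' := List.head?_eq_some_iff.mp hq.1
  refine ⟨?_, ?_⟩
  · simpa [List.head?_append] using hp.1
  · simpa [List.getLast?_append_cons] using hq.2

theorem IsWalk.take (hp : IsWalk u v p) {i : ℕ} (hi : i < p.length) :
    IsWalk u p[i] (p.take (i + 1)) :=
  ⟨by simpa [List.head?_take] using hp.1, by simp [List.getLast?_take, hi]⟩

theorem IsWalk.drop (hp : IsWalk u v p) {i : ℕ} (hi : i < p.length) :
    IsWalk p[i] v (p.drop i) :=
  ⟨by simp [List.head?_drop, hi], by simpa [List.getLast?_drop, hi] using hp.2⟩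

theorem delta_le_walkWeight (hp : IsWalk u v p) : delta w u v ≤ walkWeight w p :=
  iInf₂_le p hp

theorem deltaH_le_walkWeight (hp : IsWalk u v p) (hlen : p.length ≤ h + 1) :
    deltaH w h u v ≤ walkWeight w p :=
  iInf₂_le p ⟨hp, hlen⟩

theorem delta_le_deltaH : delta w u v ≤ deltaH w h u v :=
  le_iInf₂ fun _ hp => delta_le_walkWeight hp.1

theorem delta_le_deltaH_add_delta {c : V} :
    delta w u v ≤ deltaH w h u c + delta w c v := by
  simp only [deltaH, delta, Set.mem_ofPred_eq, ENNReal.iInf_add, ENNReal.add_iInf]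
  refine le_iInf₂ fun q hq => le_iInf₂ fun p hp => ?_
  rw [← walkWeight_append_tail hp.1.2 hq.1]
  exact delta_le_walkWeight (hp.1.append hq)

theorem deltaH_add_delta_le_walkWeight (hp : IsWalk u v p) {i : ℕ} (hi : i < p.length)
    (hih : i ≤ h) : deltaH w h u p[i] + delta w p[i] v ≤ walkWeight w p := by
  rw [← walkWeight_take_add_drop p hi]
  exact add_le_add (deltaH_le_walkWeight (hp.take hi) (by simp; omega))
    (delta_le_walkWeight (hp.drop hi))

/-- The part of an `h`-hop shortest-path tree rooted at `u`, with blocker set `Q`, that the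
argument uses: `T x` is the tree path from `u` to `x`. -/
def IsBlockedHopPathFamily (w : V → V → ℝ≥0∞) (h : ℕ) (u : V) (T : V → List V)
    (Q : Finset V) : Prop :=
  ∀ x, deltaH w h u x ≠ ⊤ →
    IsWalk u x (T x) ∧ (T x).length ≤ h + 1 ∧ walkWeight w (T x) = deltaH w h u x ∧
      ((T x).length = h + 1 → ∃ c ∈ Q, c ∈ T x)

theorem exists_blocker_or_shorter_walk {T : V → List V} {Q : Finset V}
    (hT : IsBlockedHopPathFamily w h u T Q) (hp : IsWalk u v p) (hlen : h + 1 < p.length)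
    (hfin : walkWeight w p ≠ ⊤) :
    (∃ c ∈ Q, deltaH w h u c + delta w c v ≤ walkWeight w p) ∨
      ∃ p', IsWalk u v p' ∧ p'.length < p.length ∧ walkWeight w p' ≤ walkWeight w p := by
  have hh : h < p.length := by omega
  set x := p[h]
  have hsplit := walkWeight_take_add_drop (w := w) p hh
  have hx : deltaH w h u x ≤ walkWeight w (p.take (h + 1)) :=
    deltaH_le_walkWeight (hp.take hh) (by simp)
  have hxfin : deltaH w h u x ≠ ⊤ := fun htop =>
    hfin (by rw [← hsplit, eq_top_mono hx htop, top_add])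
  obtain ⟨hTwalk, hTlen, hTweight, hTblock⟩ := hT x hxfin
  set p' := T x ++ (p.drop h).tail
  have hp' : IsWalk u v p' := hTwalk.append (hp.drop hh)
  have hp'weight : walkWeight w p' ≤ walkWeight w p := by
    rw [walkWeight_append_tail hTwalk.2 (hp.drop hh).1, hTweight, ← hsplit]
    exact add_le_add_left hx _
  rcases hTlen.lt_or_eq with hshort | hfull
  · refine .inr ⟨p', hp', ?_, hp'weight⟩
    simp only [p', List.length_append, List.length_tail, List.length_drop]
    omega
  · obtain ⟨c, hcQ, hcT⟩ := hTblock hfull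
    obtain ⟨i, hi, rfl⟩ := List.getElem_of_mem hcT
    refine .inl ⟨_, hcQ, ?_⟩
    have hi' : i < p'.length := by simp [p']; omega
    have hc := deltaH_add_delta_le_walkWeight (w := w) (h := h) hp' hi' (by omega)
    rw [List.getElem_append_left hi] at hc
    exact hc.trans hp'weight

theorem min_deltaH_iInf_le_walkWeight {T : V → List V} {Q : Finset V}
    (hT : IsBlockedHopPathFamily w h u T Q) (hp : IsWalk u v p) :
    min (deltaH w h u v) (⨅ c ∈ Q, deltaH w h u c + delta w c v) ≤ walkWeight w p := by
  induction hn : p.length using Nat.strong_induction_on generalizing p with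
  | _ n ih =>
  rcases le_or_gt p.length (h + 1) with hshort | hlong
  · exact (min_le_left _ _).trans (deltaH_le_walkWeight hp hshort)
  by_cases hfin : walkWeight w p = ⊤
  · exact hfin ▸ le_top
  rcases exists_blocker_or_shorter_walk hT hp hlong hfin with ⟨c, hcQ, hc⟩ | ⟨p', hp', hlt, hle⟩
  · exact (min_le_right _ _).trans ((iInf₂_le c hcQ).trans hc)
  · exact (ih _ (hn ▸ hlt) hp' rfl).trans hle

theorem delta_eq_min_deltaH_iInf {T : V → List V} {Q : Finset V}
    (hT : IsBlockedHopPathFamily w h u T Q) (v : V) :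
    delta w u v = min (deltaH w h u v) (⨅ c ∈ Q, deltaH w h u c + delta w c v) :=
  le_antisymm
    (le_min delta_le_deltaH (le_iInf₂ fun _ _ => delta_le_deltaH_add_delta))
    (le_iInf₂ fun _ hp => min_deltaH_iInf_le_walkWeight hT hp)

end

theorem blocker_set_apsp_identity_general
    {V : Type*}
    (w : V → V → ℝ≥0∞) (h : ℕ)
    (R : V → Set V) (par : V → V → V) (d : V → V → ℕ)
    (hdle : ∀ u : V, ∀ v ∈ R u, d u v ≤ h)
    -- the tree path from `u` to `v` (reversal of `v, par_u v, par_u² v, …, u`)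
    -- is a walk from `u` to `v` of weight `δ_h(u,v)`
    (htreePath : ∀ u : V, ∀ v ∈ R u,
      IsWalk u v ((List.iterate (par u) v (d u v + 1)).reverse) ∧
      walkWeight w ((List.iterate (par u) v (d u v + 1)).reverse) = deltaH w h u v)
    -- `R_u` contains every `v` with `δ_h(u,v) < ∞`
    (hRcover : ∀ u v : V, deltaH w h u v ≠ ⊤ → v ∈ R u)
    -- `Q` is a blocker set: every tree path of hop-length `h` contains a vertex of `Q`
    (Q : Finset V)
    (hQ : ∀ u : V, ∀ v ∈ R u, d u v = h →
      ∃ c ∈ Q, c ∈ (List.iterate (par u) v (d u v + 1)).reverse) :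
    ∀ u v : V,
      delta w u v = min (deltaH w h u v) (⨅ c ∈ Q, deltaH w h u c + delta w c v) := by
  intro u
  refine delta_eq_min_deltaH_iInf (T := fun x => (List.iterate (par u) x (d u x + 1)).reverse)
    fun x hx => ?_
  have hxR := hRcover u x hx
  simp only [List.length_reverse, List.length_iterate, add_left_inj]
  exact ⟨(htreePath u x hxR).1, by simpa using hdle u x hxR, (htreePath u x hxR).2, hQ u x hxR⟩

/-- If `Q` is a blocker set for a collection of `h`-hop SSSP trees
(one rooted at each vertex `u`, with vertex set `R u`, parent pointers `par u`,
hop-lengths `d u`), then shortest-path distances satisfy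
`δ(u,v) = min(δ_h(u,v), min_{c ∈ Q} (δ_h(u,c) + δ(c,v)))`. -/
theorem blocker_set_apsp_identity
    {V : Type*} [Fintype V] [Nonempty V]
    (w : V → V → ℝ≥0∞) (h : ℕ) (hh : 1 ≤ h)
    (R : V → Set V) (par : V → V → V) (d : V → V → ℕ)
    -- `u ∈ R_u` and `par_u(u) = u`
    (hmemR : ∀ u : V, u ∈ R u)
    (hparRoot : ∀ u : V, par u u = u)
    -- `par_u` maps `R_u` into `R_u`
    (hparR : ∀ u : V, ∀ v ∈ R u, par u v ∈ R u)
    -- every `v ∈ R_u` reaches `u` by iterating `par_u`, and `d u v` is the number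
    -- of parent-iterations needed to go from `v` to `u`
    (hreach : ∀ u : V, ∀ v ∈ R u, (par u)^[d u v] v = u)
    (hdMin : ∀ u : V, ∀ v ∈ R u, ∀ k : ℕ, (par u)^[k] v = u → d u v ≤ k)
    (hdle : ∀ u : V, ∀ v ∈ R u, d u v ≤ h)
    -- the tree path from `u` to `v` (reversal of `v, par_u v, par_u² v, …, u`)
    -- is a walk from `u` to `v` of weight `δ_h(u,v)`
    (htreePath : ∀ u : V, ∀ v ∈ R u,
      IsWalk u v ((List.iterate (par u) v (d u v + 1)).reverse) ∧
      walkWeight w ((List.iterate (par u) v (d u v + 1)).reverse) = deltaH w h u v)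
    -- `R_u` contains every `v` with `δ_h(u,v) < ∞`
    (hRcover : ∀ u v : V, deltaH w h u v ≠ ⊤ → v ∈ R u)
    -- `Q` is a blocker set: every tree path of hop-length `h` contains a vertex of `Q`
    (Q : Finset V)
    (hQ : ∀ u : V, ∀ v ∈ R u, d u v = h →
      ∃ c ∈ Q, c ∈ (List.iterate (par u) v (d u v + 1)).reverse) :
    ∀ u v : V,
      delta w u v = min (deltaH w h u v) (⨅ c ∈ Q, deltaH w h u c + delta w c v) :=
  blocker_set_apsp_identity_general w h R par d hdle htreePath hRcover Q hQ
end

section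
/- Let V be a finite set with |V| = n ≥ 1, let h be a natural number with 1 ≤ h ≤ n, and let P_1, …, P_p (p ≥ 1) be subsets of V, each of size at least h. Then there exists a set Q ⊆ V with Q ∩ P_i ≠ ∅ for every i ∈ {1,…,p} and |Q| ≤ ⌊(n/h)·ln p⌋ + 1. -/
/-!
Greedy covering: by double counting, some vertex lies in at least an `h / n` fraction of the
sets still to be blocked, so picking it leaves at most `(1 - h / n) m ≤ e^{-h/n} m` of the `m`
remaining sets. Each greedy step thus lowers `(n / h) · ln m` by at least one.
-/

open Finset Real

lemma Nat.floor_add_one_le_floor {R : Type*} [Semiring R] [LinearOrder R] [IsStrictOrderedRing R]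
    [FloorSemiring R] {a b : R} (ha : 0 ≤ a) (hab : a + 1 ≤ b) : ⌊a⌋₊ + 1 ≤ ⌊b⌋₊ :=
  Nat.floor_add_one ha ▸ Nat.floor_mono hab

lemma Real.mul_log_add_one_le {c x y : ℝ} (hc : 0 < c) (hx : 0 < x) (hy : 0 < y)
    (hyx : y ≤ (1 - c⁻¹) * x) : c * log y + 1 ≤ c * log x := by
  have hfrac : 0 < 1 - c⁻¹ := pos_of_mul_pos_left (hy.trans_le hyx) hx.le
  have hlog : log y ≤ -c⁻¹ + log x :=
    calc log y ≤ log ((1 - c⁻¹) * x) := log_le_log hy hyx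
      _ = log (1 - c⁻¹) + log x := log_mul hfrac.ne' hx.ne'
      _ ≤ -c⁻¹ + log x := by linarith [log_le_sub_one_of_pos hfrac]
  have := mul_le_mul_of_nonneg_left hlog hc.le
  rwa [mul_add, mul_neg, mul_inv_cancel₀ hc.ne', ← sub_eq_neg_add, le_sub_iff_add_le] at this

namespace Finset

variable {ι V : Type*} [Fintype V] [DecidableEq V]

lemma sum_card_filter_mem_eq_sum_card (P : ι → Finset V) (S : Finset ι) :
    ∑ v, #{i ∈ S | v ∈ P i} = ∑ i ∈ S, #(P i) := by
  simp_rw [card_eq_sum_ones, sum_filter]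
  rw [sum_comm]
  simp

lemma exists_mul_card_le_card_mul_card_filter_mem [Nonempty V] {h : ℕ} (P : ι → Finset V)
    (S : Finset ι) (hP : ∀ i ∈ S, h ≤ #(P i)) :
    ∃ v, h * #S ≤ Fintype.card V * #{i ∈ S | v ∈ P i} := by
  obtain ⟨v, -, hv⟩ := exists_le_of_sum_le (f := fun _ : V ↦ h * #S)
    (g := fun v ↦ Fintype.card V * #{i ∈ S | v ∈ P i}) univ_nonempty <| by
      rw [sum_const, card_univ, smul_eq_mul, ← mul_sum, sum_card_filter_mem_eq_sum_card]
      gcongr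
      simpa [mul_comm] using card_nsmul_le_sum S (fun i ↦ #(P i)) h hP
  exact ⟨v, hv⟩

lemma exists_card_filter_notMem_le {h : ℕ} (hh : 0 < h) (P : ι → Finset V) {S : Finset ι}
    (hS : S.Nonempty) (hP : ∀ i ∈ S, h ≤ #(P i)) :
    ∃ v, {i ∈ S | v ∉ P i} ⊂ S ∧
      (#{i ∈ S | v ∉ P i} : ℝ) ≤ (1 - (Fintype.card V / h : ℝ)⁻¹) * #S := by
  obtain ⟨i₀, hi₀⟩ := hS
  obtain ⟨w, -⟩ := card_pos.mp (hh.trans_le (hP i₀ hi₀))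
  have : Nonempty V := ⟨w⟩
  obtain ⟨v, hv⟩ := exists_mul_card_le_card_mul_card_filter_mem P S hP
  refine ⟨v, filter_ssubset.mpr ?_, ?_⟩
  · have hpos : 0 < #{i ∈ S | v ∈ P i} :=
      pos_of_mul_pos_right ((Nat.mul_pos hh (card_pos.mpr ⟨i₀, hi₀⟩)).trans_le hv) (Nat.zero_le _)
    obtain ⟨i, hi⟩ := card_pos.mp hpos
    exact ⟨i, (mem_filter.mp hi).1, not_not.mpr (mem_filter.mp hi).2⟩
  · have hV : (0 : ℝ) < Fintype.card V := by exact_mod_cast Fintype.card_pos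
    have hhit : (h / Fintype.card V : ℝ) * #S ≤ #{i ∈ S | v ∈ P i} := by
      rw [div_mul_eq_mul_div, div_le_iff₀ hV, mul_comm _ (Fintype.card V : ℝ)]
      exact_mod_cast hv
    have hsplit : (#{i ∈ S | v ∈ P i} : ℝ) + #{i ∈ S | v ∉ P i} = #S := by
      exact_mod_cast card_filter_add_card_filter_not (v ∈ P ·)
    rw [inv_div, sub_mul, one_mul]
    linarith

theorem exists_blocker_card_le_floor_log {h : ℕ} (hh : 0 < h) (P : ι → Finset V)
    (S : Finset ι) (hP : ∀ i ∈ S, h ≤ #(P i)) :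
    ∃ Q : Finset V, (∀ i ∈ S, (Q ∩ P i).Nonempty) ∧
      #Q ≤ ⌊(Fintype.card V / h : ℝ) * log #S⌋₊ + 1 := by
  induction S using Finset.strongInduction with | H S ih =>
  rcases S.eq_empty_or_nonempty with rfl | hS
  · exact ⟨∅, by simp⟩
  obtain ⟨v, hsub, hcard⟩ := exists_card_filter_notMem_le hh P hS hP
  set S' := {i ∈ S | v ∉ P i}
  have hc : (0 : ℝ) < Fintype.card V / h := by
    obtain ⟨i₀, hi₀⟩ := hS
    have : 0 < Fintype.card V := (hh.trans_le (hP i₀ hi₀)).trans_le (card_le_univ _)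
    positivity
  obtain ⟨Q', hQ', hQ'card⟩ : ∃ Q' : Finset V, (∀ i ∈ S', (Q' ∩ P i).Nonempty) ∧
      #Q' + 1 ≤ ⌊(Fintype.card V / h : ℝ) * log #S⌋₊ + 1 := by
    rcases S'.eq_empty_or_nonempty with hS' | hS'
    · exact ⟨∅, by simp [hS'], by simp⟩
    obtain ⟨Q', hQ', hQ'card⟩ := ih S' hsub fun i hi ↦ hP i (mem_of_mem_filter i hi)
    have hstep := Nat.floor_add_one_le_floor (mul_nonneg hc.le (log_natCast_nonneg #S'))
      (mul_log_add_one_le hc (by exact_mod_cast hS.card_pos) (by exact_mod_cast hS'.card_pos) hcard)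
    exact ⟨Q', hQ', by omega⟩
  refine ⟨insert v Q', fun i hi ↦ ?_, (card_insert_le v Q').trans hQ'card⟩
  by_cases hvi : v ∈ P i
  · exact ⟨v, mem_inter.mpr ⟨mem_insert_self v Q', hvi⟩⟩
  · exact (hQ' i (mem_filter.mpr ⟨hi, hvi⟩)).mono (inter_subset_inter_right (subset_insert v Q'))

end Finset

theorem exists_small_blocker_set_general
    {V : Type*} [Fintype V] [DecidableEq V]
    (n : ℕ) (hn : Fintype.card V = n)
    (h : ℕ) (hh : 1 ≤ h)
    (p : ℕ)
    (P : Fin p → Finset V) (hP : ∀ i : Fin p, h ≤ (P i).card) :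
    ∃ Q : Finset V, (∀ i : Fin p, (Q ∩ P i).Nonempty) ∧
      Q.card ≤ ⌊(n / h : ℝ) * Real.log p⌋₊ + 1 := by
  obtain ⟨Q, hQ, hQcard⟩ := exists_blocker_card_le_floor_log hh P univ fun i _ ↦ hP i
  refine ⟨Q, fun i ↦ hQ i (mem_univ i), ?_⟩
  simpa [hn] using hQcard

/-- Given `p ≥ 1` subsets of an `n`-element set `V` (`1 ≤ h ≤ n`), each
of size at least `h`, there is a blocker set `Q` meeting every subset with
`|Q| ≤ ⌊(n/h)·ln p⌋ + 1`. -/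
theorem exists_small_blocker_set
    {V : Type*} [Fintype V] [DecidableEq V]
    (n : ℕ) (hn : Fintype.card V = n) (hn1 : 1 ≤ n)
    (h : ℕ) (hh : 1 ≤ h) (hhn : h ≤ n)
    (p : ℕ) (hp : 1 ≤ p)
    (P : Fin p → Finset V) (hP : ∀ i : Fin p, h ≤ (P i).card) :
    ∃ Q : Finset V, (∀ i : Fin p, (Q ∩ P i).Nonempty) ∧
      Q.card ≤ ⌊(n / h : ℝ) * Real.log p⌋₊ + 1 :=
  exists_small_blocker_set_general n hn h hh p P hP
end
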